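/- For every α ∈ (0,1] and η ∈ (0,α) there is a constant C < ∞, depending only on α and η, with the following property. Let (X,μ) be a probability space, let s : X → S, t : X → T and r : X → R be measurable maps into finite sets such that r is coarser than both s and t (there exist functions f : S → R and g : T → R with r = f ∘ s = g ∘ t), and set I := I_μ(s;t|r). Then for every measurable U ⊆ X with μ(U) ≥ α there is a finite subset S₀ ⊆ U such that |S₀| ≤ |R|·exp(C·(I + 1)), where |R| is the cardinality of R, and μ( U ∩ { x : ∃ w ∈ U, t(x) = t(w) and ∃ z ∈ S₀, s(w) = s(z) } ) > μ(U) − η. -/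

import Mathlib

open MeasureTheory

/-- Shannon entropy of a finite-valued map, with natural logarithm. -/
noncomputable def finEntropy {X S : Type*} [MeasurableSpace X] [Fintype S]
    (μ : Measure X) (s : X → S) : ℝ :=
  ∑ i : S, Real.negMulLog ((μ (s ⁻¹' {i})).toReal)

/-- Conditional mutual information `I_μ(s;t|r)` of finite-valued maps. -/
noncomputable def finCondMutualInfo {X S T R : Type*} [MeasurableSpace X]
    [Fintype S] [Fintype T] [Fintype R]
    (μ : Measure X) (s : X → S) (t : X → T) (r : X → R) : ℝ :=
  finEntropy μ (fun x => (s x, r x)) + finEntropy μ (fun x => (t x, r x))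
    - finEntropy μ (fun x => (s x, t x, r x)) - finEntropy μ r

/-!
Everything is read off the weights `q i j = μ(U ∩ {s = i, t = j})`, which vanish unless
`f i = g j`. Conditional mutual information is superadditive up to `2 log 2` when a measure is
split, so `I(q) ≤ I + 2` for `μ = μ|U + μ|Uᶜ`. Moreover `I(q)` is the `q`-average of the pointwise
conditional mutual information `log (q i j q(r = f i) / (q(s = i) q(t = j)))`, and
`x log (x / y) ≥ x - y` makes Markov's inequality available: all but `η / 4` of the mass sits
on entries where it is at most `K = 4 (I(q) + 1) / η`, and the columns carrying more than half
of their mass elsewhere weigh at most `η / 2`. On a good entry `q i j ≤ e^K P(s = i | r) q(t = j)`,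
so every other column meets rows of conditional probability at least `e^{-K} / 2` in total, and
a greedy cover reaches all of them but mass `η / 4` with `O(|R| e^K log (1 / η))` rows. One
point of `U` in each chosen row gives `S₀`.
-/

open Finset Real

namespace EfficientCover

variable {S T R : Type*} {q q' : S → T → ℝ} {f : S → R} {g : T → R}

section Weights

def rowMass [Fintype T] (q : S → T → ℝ) (i : S) : ℝ := ∑ j, q i j

def colMass [Fintype S] (q : S → T → ℝ) (j : T) : ℝ := ∑ i, q i j

def fibreMass [Fintype S] [Fintype T] [DecidableEq R] (f : S → R) (q : S → T → ℝ) (ρ : R) : ℝ :=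
  ∑ i with f i = ρ, rowMass q i

/-- `I(s;t|r)` for `(s, t)` with joint weights `q` and `r = f ∘ s`, in the form
`H(s) + H(t) - H(s,t) - H(r)`. -/
noncomputable def condMutualInfo [Fintype S] [Fintype T] [Fintype R] [DecidableEq R]
    (f : S → R) (q : S → T → ℝ) : ℝ :=
  ∑ i, negMulLog (rowMass q i) + ∑ j, negMulLog (colMass q j)
    - ∑ i, ∑ j, negMulLog (q i j) - ∑ ρ, negMulLog (fibreMass f q ρ)

noncomputable def pointwiseCondMutualInfo [Fintype S] [Fintype T] [DecidableEq R]
    (f : S → R) (q : S → T → ℝ) (i : S) (j : T) : ℝ :=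
  log (q i j * fibreMass f q (f i) / (rowMass q i * colMass q j))

/-- The mass of `(i, j)` under the coupling of the marginals of `q` that is conditionally
independent given the fibres of `f`, restricted to the support of `q`. -/
noncomputable def condIndepMass [Fintype S] [Fintype T] [DecidableEq R]
    (f : S → R) (q : S → T → ℝ) (i : S) (j : T) : ℝ :=
  if q i j = 0 then 0 else rowMass q i * colMass q j / fibreMass f q (f i)

noncomputable def badColMass [Fintype S] [Fintype T] [DecidableEq R]
    (f : S → R) (q : S → T → ℝ) (K : ℝ) (j : T) : ℝ :=
  ∑ i, if K < pointwiseCondMutualInfo f q i j then q i j else 0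

noncomputable def badMass [Fintype S] [Fintype T] [DecidableEq R]
    (f : S → R) (q : S → T → ℝ) (K : ℝ) : ℝ :=
  ∑ j, badColMass f q K j

lemma rowMass_nonneg [Fintype T] (hq : ∀ i j, 0 ≤ q i j) (i : S) : 0 ≤ rowMass q i :=
  sum_nonneg fun j _ => hq i j

lemma colMass_nonneg [Fintype S] (hq : ∀ i j, 0 ≤ q i j) (j : T) : 0 ≤ colMass q j :=
  sum_nonneg fun i _ => hq i j

lemma fibreMass_nonneg [Fintype S] [Fintype T] [DecidableEq R] (hq : ∀ i j, 0 ≤ q i j)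
    (ρ : R) : 0 ≤ fibreMass f q ρ :=
  sum_nonneg fun i _ => rowMass_nonneg hq i

lemma le_rowMass [Fintype T] (hq : ∀ i j, 0 ≤ q i j) (i : S) (j : T) : q i j ≤ rowMass q i :=
  single_le_sum (fun j _ => hq i j) (mem_univ j)

lemma le_colMass [Fintype S] (hq : ∀ i j, 0 ≤ q i j) (i : S) (j : T) : q i j ≤ colMass q j :=
  single_le_sum (fun i _ => hq i j) (mem_univ i)

lemma rowMass_le_fibreMass [Fintype S] [Fintype T] [DecidableEq R] (hq : ∀ i j, 0 ≤ q i j)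
    (i : S) : rowMass q i ≤ fibreMass f q (f i) :=
  single_le_sum (fun i _ => rowMass_nonneg hq i) (by simp)

lemma sum_colMass [Fintype S] [Fintype T] (q : S → T → ℝ) :
    ∑ j, colMass q j = ∑ i, rowMass q i :=
  sum_comm

lemma fibreMass_eq_sum_colMass [Fintype S] [Fintype T] [DecidableEq R]
    (hsupp : ∀ i j, q i j ≠ 0 → f i = g j) (ρ : R) :
    fibreMass f q ρ = ∑ j with g j = ρ, colMass q j := by
  have h : ∀ i j, (if f i = ρ then q i j else 0) = if g j = ρ then q i j else 0 := fun i j => by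
    by_cases hq : q i j = 0
    · simp [hq]
    · rw [hsupp i j hq]
  simp only [fibreMass, rowMass, colMass, sum_filter, ite_sum_zero]
  simp_rw [h]
  exact sum_comm

lemma pos_and_marginals_pos [Fintype S] [Fintype T] [DecidableEq R] (hq : ∀ i j, 0 ≤ q i j)
    {i : S} {j : T} (h : q i j ≠ 0) :
    0 < q i j ∧ 0 < rowMass q i ∧ 0 < colMass q j ∧ 0 < fibreMass f q (f i) := by
  have h₀ := (hq i j).lt_of_ne' h
  have h₁ := h₀.trans_le (le_rowMass hq i j)
  exact ⟨h₀, h₁, h₀.trans_le (le_colMass hq i j), h₁.trans_le (rowMass_le_fibreMass hq i)⟩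

lemma condIndepMass_nonneg [Fintype S] [Fintype T] [DecidableEq R] (hq : ∀ i j, 0 ≤ q i j)
    (i : S) (j : T) : 0 ≤ condIndepMass f q i j := by
  unfold condIndepMass
  split_ifs
  · exact le_rfl
  · exact div_nonneg (mul_nonneg (rowMass_nonneg hq i) (colMass_nonneg hq j))
      (fibreMass_nonneg hq _)

lemma condIndepMass_le [Fintype S] [Fintype T] [DecidableEq R] (hq : ∀ i j, 0 ≤ q i j)
    (i : S) (j : T) : condIndepMass f q i j ≤ rowMass q i * colMass q j / fibreMass f q (f i) := by
  unfold condIndepMass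
  split_ifs
  · exact div_nonneg (mul_nonneg (rowMass_nonneg hq i) (colMass_nonneg hq j))
      (fibreMass_nonneg hq _)
  · exact le_rfl

lemma sum_fibreMass_mul [Fintype S] [Fintype T] [Fintype R] [DecidableEq R] (φ : R → ℝ) :
    ∑ ρ, fibreMass f q ρ * φ ρ = ∑ i, rowMass q i * φ (f i) := by
  rw [← sum_fiberwise univ f (fun i => rowMass q i * φ (f i))]
  refine sum_congr rfl fun ρ _ => ?_
  rw [fibreMass, sum_mul]
  exact sum_congr rfl fun i hi => by rw [(mem_filter.1 hi).2]

lemma mul_pointwiseCondMutualInfo [Fintype S] [Fintype T] [DecidableEq R]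
    (hq : ∀ i j, 0 ≤ q i j) (i : S) (j : T) :
    q i j * pointwiseCondMutualInfo f q i j = q i j * log (q i j)
      + q i j * log (fibreMass f q (f i)) - q i j * log (rowMass q i)
      - q i j * log (colMass q j) := by
  rcases eq_or_ne (q i j) 0 with h | h
  · simp [h]
  obtain ⟨h₀, hS, hT, hR⟩ := pos_and_marginals_pos (f := f) hq h
  rw [pointwiseCondMutualInfo, log_div (by positivity) (by positivity),
    log_mul h₀.ne' hR.ne', log_mul hS.ne' hT.ne']
  ring

lemma condMutualInfo_eq_sum_mul_pointwiseCondMutualInfo [Fintype S] [Fintype T] [Fintype R]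
    [DecidableEq R] (hq : ∀ i j, 0 ≤ q i j) :
    condMutualInfo f q = ∑ i, ∑ j, q i j * pointwiseCondMutualInfo f q i j := by
  have hS : ∑ i, negMulLog (rowMass q i) = -∑ i, ∑ j, q i j * log (rowMass q i) := by
    simp [negMulLog, rowMass, sum_mul]
  have hT : ∑ j, negMulLog (colMass q j) = -∑ i, ∑ j, q i j * log (colMass q j) := by
    rw [sum_comm]
    simp [negMulLog, colMass, sum_mul]
  have hST : ∑ i, ∑ j, negMulLog (q i j) = -∑ i, ∑ j, q i j * log (q i j) := by
    simp [negMulLog]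
  have hR : ∑ ρ, negMulLog (fibreMass f q ρ)
      = -∑ i, ∑ j, q i j * log (fibreMass f q (f i)) := by
    simp only [negMulLog, neg_mul, sum_neg_distrib, sum_fibreMass_mul, rowMass, sum_mul]
  rw [condMutualInfo, hS, hT, hR, hST]
  simp only [mul_pointwiseCondMutualInfo hq, sum_sub_distrib, sum_add_distrib]
  ring

lemma sub_condIndepMass_le_mul_pointwiseCondMutualInfo [Fintype S] [Fintype T] [DecidableEq R]
    (hq : ∀ i j, 0 ≤ q i j) (i : S) (j : T) :
    q i j - condIndepMass f q i j ≤ q i j * pointwiseCondMutualInfo f q i j := by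
  rw [condIndepMass]
  split_ifs with h
  · simp [h]
  obtain ⟨h₀, hS, hT, hR⟩ := pos_and_marginals_pos (f := f) hq h
  have hlog := one_sub_inv_le_log_of_pos
    (show 0 < q i j * fibreMass f q (f i) / (rowMass q i * colMass q j) by positivity)
  rw [pointwiseCondMutualInfo]
  calc q i j - rowMass q i * colMass q j / fibreMass f q (f i)
      = q i j * (1 - (q i j * fibreMass f q (f i) / (rowMass q i * colMass q j))⁻¹) := by
        field_simp
    _ ≤ _ := mul_le_mul_of_nonneg_left hlog h₀.le

lemma sum_condIndepMass_le [Fintype S] [Fintype T] [DecidableEq R] (hq : ∀ i j, 0 ≤ q i j)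
    (hsupp : ∀ i j, q i j ≠ 0 → f i = g j) :
    ∑ i, ∑ j, condIndepMass f q i j ≤ ∑ i, rowMass q i := by
  refine sum_le_sum fun i _ => ?_
  calc ∑ j, condIndepMass f q i j
      ≤ ∑ j with g j = f i, rowMass q i * colMass q j / fibreMass f q (f i) := by
        rw [sum_filter]
        refine sum_le_sum fun j _ => ?_
        split_ifs with h
        · exact condIndepMass_le hq i j
        · have h₀ : q i j = 0 := by_contra fun h₀ => h (hsupp i j h₀).symm
          simp [condIndepMass, h₀]
    _ = rowMass q i / fibreMass f q (f i) * ∑ j with g j = f i, colMass q j := by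
        rw [mul_sum]
        exact sum_congr rfl fun j _ => by ring
    _ = rowMass q i / fibreMass f q (f i) * fibreMass f q (f i) := by
        rw [fibreMass_eq_sum_colMass hsupp]
    _ ≤ rowMass q i := by
        rcases eq_or_ne (fibreMass f q (f i)) 0 with h | h
        · simp [h, rowMass_nonneg hq i]
        · rw [div_mul_cancel₀ _ h]

theorem condMutualInfo_nonneg [Fintype S] [Fintype T] [Fintype R] [DecidableEq R]
    (hq : ∀ i j, 0 ≤ q i j) (hsupp : ∀ i j, q i j ≠ 0 → f i = g j) :
    0 ≤ condMutualInfo f q := by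
  rw [condMutualInfo_eq_sum_mul_pointwiseCondMutualInfo hq]
  calc 0 ≤ ∑ i, rowMass q i - ∑ i, ∑ j, condIndepMass f q i j :=
        sub_nonneg.2 (sum_condIndepMass_le hq hsupp)
    _ = ∑ i, ∑ j, (q i j - condIndepMass f q i j) := by simp [rowMass]
    _ ≤ _ := sum_le_sum fun i _ => sum_le_sum fun j _ =>
        sub_condIndepMass_le_mul_pointwiseCondMutualInfo hq i j

theorem mul_badMass_le [Fintype S] [Fintype T] [Fintype R] [DecidableEq R]
    (hq : ∀ i j, 0 ≤ q i j) (hsupp : ∀ i j, q i j ≠ 0 → f i = g j) (K : ℝ) :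
    K * badMass f q K ≤ condMutualInfo f q + ∑ i, rowMass q i := by
  have hpoint : ∀ i j, (if K < pointwiseCondMutualInfo f q i j then K * q i j else 0)
      - condIndepMass f q i j ≤ q i j * pointwiseCondMutualInfo f q i j := fun i j => by
    have h := sub_condIndepMass_le_mul_pointwiseCondMutualInfo (f := f) hq i j
    split_ifs with hK
    · have : K * q i j ≤ q i j * pointwiseCondMutualInfo f q i j := by
        rw [mul_comm]
        exact mul_le_mul_of_nonneg_left hK.le (hq i j)
      linarith [condIndepMass_nonneg (f := f) hq i j]
    · linarith [hq i j]
  have hsum := sum_le_sum fun i (_ : i ∈ univ) => sum_le_sum fun j (_ : j ∈ univ) => hpoint i j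
  simp only [sum_sub_distrib, ← condMutualInfo_eq_sum_mul_pointwiseCondMutualInfo hq] at hsum
  have hbad : K * badMass f q K
      = ∑ i, ∑ j, if K < pointwiseCondMutualInfo f q i j then K * q i j else 0 := by
    simp only [badMass, badColMass, mul_sum, mul_ite, mul_zero]
    exact sum_comm
  linarith [sum_condIndepMass_le hq hsupp]

lemma negMulLog_add_le {a b : ℝ} (ha : 0 ≤ a) (hb : 0 ≤ b) :
    negMulLog (a + b) ≤ negMulLog a + negMulLog b := by
  have h : ∀ {x y : ℝ}, 0 ≤ x → 0 ≤ y → x * log x ≤ x * log (x + y) := fun {x y} hx hy => by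
    rcases hx.eq_or_lt with rfl | hx
    · simp
    · exact mul_le_mul_of_nonneg_left (log_le_log hx (by linarith)) hx.le
  have h₁ := h ha hb
  have h₂ := h hb ha
  rw [add_comm b] at h₂
  simp only [negMulLog, neg_mul]
  linarith

lemma negMulLog_add_add_le {a b : ℝ} (ha : 0 ≤ a) (hb : 0 ≤ b) :
    negMulLog a + negMulLog b ≤ negMulLog (a + b) + (a + b) * log 2 := by
  have h := concaveOn_negMulLog.2 (Set.mem_Ici.2 ha) (Set.mem_Ici.2 hb)
    (by norm_num : (0 : ℝ) ≤ 1 / 2) (by norm_num : (0 : ℝ) ≤ 1 / 2) (by norm_num)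
  have e : (1 / 2 : ℝ) • a + (1 / 2 : ℝ) • b = (a + b) * 2⁻¹ := by
    simp only [smul_eq_mul]
    ring
  rw [e, negMulLog_mul] at h
  simp only [smul_eq_mul, negMulLog, log_inv] at h ⊢
  linarith

lemma rowMass_add [Fintype T] (q q' : S → T → ℝ) (i : S) :
    rowMass (q + q') i = rowMass q i + rowMass q' i :=
  sum_add_distrib

lemma colMass_add [Fintype S] (q q' : S → T → ℝ) (j : T) :
    colMass (q + q') j = colMass q j + colMass q' j :=
  sum_add_distrib

lemma fibreMass_add [Fintype S] [Fintype T] [DecidableEq R] (q q' : S → T → ℝ) (ρ : R) :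
    fibreMass f (q + q') ρ = fibreMass f q ρ + fibreMass f q' ρ := by
  simp only [fibreMass, rowMass_add, sum_add_distrib]

theorem condMutualInfo_add_le [Fintype S] [Fintype T] [Fintype R] [DecidableEq R]
    (hq : ∀ i j, 0 ≤ q i j) (hq' : ∀ i j, 0 ≤ q' i j) :
    condMutualInfo f q + condMutualInfo f q' ≤ condMutualInfo f (q + q')
      + 2 * log 2 * (∑ i, rowMass q i + ∑ i, rowMass q' i) := by
  have hS : ∑ i, negMulLog (rowMass q i) + ∑ i, negMulLog (rowMass q' i)
      ≤ ∑ i, negMulLog (rowMass (q + q') i)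
        + (∑ i, rowMass q i + ∑ i, rowMass q' i) * log 2 := by
    simp only [rowMass_add, ← sum_add_distrib, sum_mul]
    exact sum_le_sum fun i _ => negMulLog_add_add_le (rowMass_nonneg hq i) (rowMass_nonneg hq' i)
  have hT : ∑ j, negMulLog (colMass q j) + ∑ j, negMulLog (colMass q' j)
      ≤ ∑ j, negMulLog (colMass (q + q') j)
        + (∑ i, rowMass q i + ∑ i, rowMass q' i) * log 2 := by
    simp only [← sum_colMass, colMass_add, ← sum_add_distrib, sum_mul]
    exact sum_le_sum fun j _ => negMulLog_add_add_le (colMass_nonneg hq j) (colMass_nonneg hq' j)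
  have hST : ∑ i, ∑ j, negMulLog ((q + q') i j)
      ≤ ∑ i, ∑ j, negMulLog (q i j) + ∑ i, ∑ j, negMulLog (q' i j) := by
    simp only [Pi.add_apply, ← sum_add_distrib]
    exact sum_le_sum fun i _ => sum_le_sum fun j _ => negMulLog_add_le (hq i j) (hq' i j)
  have hR : ∑ ρ, negMulLog (fibreMass f (q + q') ρ)
      ≤ ∑ ρ, negMulLog (fibreMass f q ρ) + ∑ ρ, negMulLog (fibreMass f q' ρ) := by
    simp only [fibreMass_add, ← sum_add_distrib]
    exact sum_le_sum fun ρ _ =>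
      negMulLog_add_le (fibreMass_nonneg hq ρ) (fibreMass_nonneg hq' ρ)
  simp only [condMutualInfo]
  linarith

end Weights

section Covering

variable {ι κ : Type*} {u : ι → ℝ} {w : κ → ℝ} {N : κ → Finset ι}

def uncoveredMass [Fintype κ] [DecidableEq ι] (w : κ → ℝ) (N : κ → Finset ι) (A : Finset ι) :
    ℝ :=
  ∑ j with Disjoint (N j) A, w j

lemma uncoveredMass_nonneg [Fintype κ] [DecidableEq ι] (hw : ∀ j, 0 ≤ w j) (A : Finset ι) :
    0 ≤ uncoveredMass w N A :=
  sum_nonneg fun j _ => hw j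

lemma uncoveredMass_empty [Fintype κ] [DecidableEq ι] (w : κ → ℝ) (N : κ → Finset ι) :
    uncoveredMass w N ∅ = ∑ j, w j := by
  simp [uncoveredMass]

lemma uncoveredMass_insert [Fintype κ] [DecidableEq ι] (a : ι) (A : Finset ι) :
    uncoveredMass w N (insert a A)
      = uncoveredMass w N A - ∑ j with Disjoint (N j) A ∧ a ∈ N j, w j := by
  rw [eq_sub_iff_add_eq, uncoveredMass, uncoveredMass, sum_filter, sum_filter, sum_filter,
    ← sum_add_distrib]
  refine sum_congr rfl fun j _ => ?_
  by_cases hA : Disjoint (N j) A <;> by_cases ha : a ∈ N j <;>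
    simp [disjoint_insert_right, hA, ha]

/-- The `u`-average of the mass newly covered by a single `a` is at least `θ B` times the
uncovered mass, so its maximum is at least `θ` times the uncovered mass. -/
lemma exists_uncoveredMass_le_one_sub_mul [Fintype ι] [Fintype κ] [DecidableEq ι]
    (hu : ∀ i, 0 ≤ u i) (hw : ∀ j, 0 ≤ w j) {B θ : ℝ} (hB : 0 < B) (hθ : 0 < θ)
    (hsum : ∑ i, u i ≤ B) (hcov : ∀ j, w j ≠ 0 → θ * B ≤ ∑ i ∈ N j, u i) (A : Finset ι) :
    ∃ A' : Finset ι, #A' ≤ #A + 1 ∧ uncoveredMass w N A' ≤ (1 - θ) * uncoveredMass w N A := by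
  set x := uncoveredMass w N A
  rcases (uncoveredMass_nonneg (N := N) hw A).eq_or_lt with hx | hx
  · exact ⟨A, by omega, by rw [← hx]; simp [x, ← hx]⟩
  set c : ι → ℝ := fun a => ∑ j with Disjoint (N j) A ∧ a ∈ N j, w j
  have hc : ∀ a, 0 ≤ c a := fun a => sum_nonneg fun j _ => hw j
  have hsum_uc : θ * B * x ≤ ∑ a, u a * c a := by
    have e : ∑ a, u a * c a = ∑ j with Disjoint (N j) A, w j * ∑ i ∈ N j, u i := by
      simp only [c, mul_sum, sum_filter]
      rw [sum_comm]
      refine sum_congr rfl fun j _ => ?_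
      by_cases hA : Disjoint (N j) A <;> simp [hA, mul_comm]
    rw [e, mul_comm]
    simp only [x, uncoveredMass, sum_mul]
    refine sum_le_sum fun j _ => ?_
    rcases eq_or_ne (w j) 0 with h | h
    · simp [h]
    · exact mul_le_mul_of_nonneg_left (hcov j h) (hw j)
  have hne : (univ : Finset ι).Nonempty :=
    nonempty_of_sum_ne_zero (f := fun a => u a * c a)
      ((by positivity : 0 < θ * B * x).trans_le hsum_uc).ne'
  obtain ⟨a, -, ha⟩ := exists_max_image univ c hne
  refine ⟨insert a A, card_insert_le a A, ?_⟩
  have hca : θ * x ≤ c a := by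
    refine le_of_mul_le_mul_left ?_ hB
    calc B * (θ * x) = θ * B * x := by ring
      _ ≤ ∑ a', u a' * c a' := hsum_uc
      _ ≤ ∑ a', u a' * c a :=
          sum_le_sum fun a' _ => mul_le_mul_of_nonneg_left (ha a' (mem_univ _)) (hu a')
      _ = (∑ a', u a') * c a := by rw [sum_mul]
      _ ≤ B * c a := mul_le_mul_of_nonneg_right hsum (hc a)
  rw [uncoveredMass_insert]
  linarith

theorem exists_card_le_uncoveredMass_le [Fintype ι] [Fintype κ] [DecidableEq ι]
    (hu : ∀ i, 0 ≤ u i) (hw : ∀ j, 0 ≤ w j) {B θ : ℝ} (hB : 0 < B) (hθ : 0 < θ) (hθ₁ : θ ≤ 1)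
    (hsum : ∑ i, u i ≤ B) (hcov : ∀ j, w j ≠ 0 → θ * B ≤ ∑ i ∈ N j, u i) (M : ℕ) :
    ∃ A : Finset ι, #A ≤ M ∧ uncoveredMass w N A ≤ (1 - θ) ^ M * ∑ j, w j := by
  induction M with
  | zero => exact ⟨∅, by simp, by simp [uncoveredMass_empty]⟩
  | succ M ih =>
    obtain ⟨A, hA, hAw⟩ := ih
    obtain ⟨A', hA', hA'w⟩ := exists_uncoveredMass_le_one_sub_mul hu hw hB hθ hsum hcov A
    refine ⟨A', by omega, hA'w.trans ?_⟩
    rw [pow_succ', mul_assoc]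
    exact mul_le_mul_of_nonneg_left hAw (by linarith)

end Covering

section Spread

noncomputable def colSupport [Fintype S] (q : S → T → ℝ) (j : T) : Finset S := {i | q i j ≠ 0}

noncomputable def rowMassGivenFibre [Fintype S] [Fintype T] [DecidableEq R]
    (f : S → R) (q : S → T → ℝ) (i : S) : ℝ :=
  rowMass q i / fibreMass f q (f i)

noncomputable def spreadColMass [Fintype S] [Fintype T] [DecidableEq R]
    (f : S → R) (q : S → T → ℝ) (K : ℝ) (j : T) : ℝ :=
  if 2 * badColMass f q K j ≤ colMass q j then colMass q j else 0

lemma rowMassGivenFibre_nonneg [Fintype S] [Fintype T] [DecidableEq R] (hq : ∀ i j, 0 ≤ q i j)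
    (i : S) : 0 ≤ rowMassGivenFibre f q i :=
  div_nonneg (rowMass_nonneg hq i) (fibreMass_nonneg hq _)

lemma sum_rowMassGivenFibre_le_card [Fintype S] [Fintype T] [Fintype R] [DecidableEq R] :
    ∑ i, rowMassGivenFibre f q i ≤ Fintype.card R := by
  have h := sum_fibreMass_mul (f := f) (q := q) fun ρ => (fibreMass f q ρ)⁻¹
  simp only [← div_eq_mul_inv] at h
  simp only [rowMassGivenFibre]
  rw [← h, ← nsmul_one, ← card_univ, ← sum_const]
  exact sum_le_sum fun ρ _ => div_self_le_one _

lemma badColMass_nonneg [Fintype S] [Fintype T] [DecidableEq R] (hq : ∀ i j, 0 ≤ q i j)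
    (K : ℝ) (j : T) : 0 ≤ badColMass f q K j :=
  sum_nonneg fun i _ => by split_ifs <;> simp [hq i j]

lemma spreadColMass_nonneg [Fintype S] [Fintype T] [DecidableEq R] (hq : ∀ i j, 0 ≤ q i j)
    (K : ℝ) (j : T) : 0 ≤ spreadColMass f q K j := by
  unfold spreadColMass
  split_ifs <;> simp [colMass_nonneg hq j]

lemma spreadColMass_le_colMass [Fintype S] [Fintype T] [DecidableEq R] (hq : ∀ i j, 0 ≤ q i j)
    (K : ℝ) (j : T) : spreadColMass f q K j ≤ colMass q j := by
  unfold spreadColMass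
  split_ifs <;> simp [colMass_nonneg hq j]

lemma colMass_le_spreadColMass_add [Fintype S] [Fintype T] [DecidableEq R]
    (hq : ∀ i j, 0 ≤ q i j) (K : ℝ) (j : T) :
    colMass q j ≤ spreadColMass f q K j + 2 * badColMass f q K j := by
  unfold spreadColMass
  split_ifs
  · linarith [badColMass_nonneg (f := f) hq K j]
  · linarith

lemma le_exp_mul_of_pointwiseCondMutualInfo_le [Fintype S] [Fintype T] [DecidableEq R]
    (hq : ∀ i j, 0 ≤ q i j) {i : S} {j : T} (h : q i j ≠ 0) {K : ℝ}
    (hK : pointwiseCondMutualInfo f q i j ≤ K) :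
    q i j ≤ exp K * rowMassGivenFibre f q i * colMass q j := by
  obtain ⟨h₀, hS, hT, hR⟩ := pos_and_marginals_pos (f := f) hq h
  rw [pointwiseCondMutualInfo, log_le_iff_le_exp (by positivity),
    div_le_iff₀ (by positivity)] at hK
  calc q i j = q i j * fibreMass f q (f i) / fibreMass f q (f i) := by field_simp
    _ ≤ exp K * (rowMass q i * colMass q j) / fibreMass f q (f i) :=
        div_le_div_of_nonneg_right hK hR.le
    _ = _ := by rw [rowMassGivenFibre]; ring

lemma exp_neg_div_two_le_sum_rowMassGivenFibre [Fintype S] [Fintype T] [DecidableEq R]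
    (hq : ∀ i j, 0 ≤ q i j) {K : ℝ} {j : T} (hj : spreadColMass f q K j ≠ 0) :
    exp (-K) / 2 ≤ ∑ i ∈ colSupport q j, rowMassGivenFibre f q i := by
  rw [spreadColMass, ite_ne_right_iff] at hj
  obtain ⟨hspread, hj⟩ := hj
  have hpos : 0 < colMass q j := (colMass_nonneg hq j).lt_of_ne' hj
  have hgood : colMass q j - badColMass f q K j
      ≤ colMass q j * (exp K * ∑ i ∈ colSupport q j, rowMassGivenFibre f q i) := by
    have e : colMass q j - badColMass f q K j
        = ∑ i, if K < pointwiseCondMutualInfo f q i j then 0 else q i j := by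
      rw [colMass, badColMass, ← sum_sub_distrib]
      exact sum_congr rfl fun i _ => by split_ifs <;> ring
    rw [e, mul_comm, mul_sum, sum_mul, colSupport, sum_filter]
    refine sum_le_sum fun i _ => ?_
    split_ifs with hK h₀ h₀
    · exact mul_nonneg (mul_nonneg (exp_pos K).le (rowMassGivenFibre_nonneg hq i))
        (colMass_nonneg hq j)
    · exact le_rfl
    · exact le_exp_mul_of_pointwiseCondMutualInfo_le hq h₀ (not_lt.1 hK)
    · simp [not_not.1 h₀]
  have hhalf : 1 / 2 ≤ exp K * ∑ i ∈ colSupport q j, rowMassGivenFibre f q i :=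
    le_of_mul_le_mul_left (by linarith) hpos
  calc exp (-K) / 2 = exp (-K) * (1 / 2) := by ring
    _ ≤ exp (-K) * (exp K * ∑ i ∈ colSupport q j, rowMassGivenFibre f q i) :=
        mul_le_mul_of_nonneg_left hhalf (exp_pos _).le
    _ = _ := by rw [← mul_assoc, ← exp_add, neg_add_cancel, exp_zero, one_mul]

lemma sum_uncovered_colMass_le [Fintype S] [Fintype T] [DecidableEq R] [DecidableEq S]
    (hq : ∀ i j, 0 ≤ q i j) (K : ℝ) (A : Finset S) :
    ∑ j with Disjoint (colSupport q j) A, colMass q j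
      ≤ uncoveredMass (spreadColMass f q K) (colSupport q) A + 2 * badMass f q K := by
  calc ∑ j with Disjoint (colSupport q j) A, colMass q j
      ≤ ∑ j with Disjoint (colSupport q j) A,
          (spreadColMass f q K j + 2 * badColMass f q K j) :=
        sum_le_sum fun j _ => colMass_le_spreadColMass_add hq K j
    _ ≤ _ := by
        rw [sum_add_distrib, ← mul_sum, uncoveredMass, badMass]
        gcongr
        · exact fun j _ _ => badColMass_nonneg hq K j
        · exact subset_univ _

end Spread

lemma one_sub_pow_le_of_log_inv_le {θ ε : ℝ} {M : ℕ} (hθ₁ : θ ≤ 1) (hε : 0 < ε)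
    (hM : log ε⁻¹ ≤ θ * M) : (1 - θ) ^ M ≤ ε :=
  calc (1 - θ) ^ M ≤ exp (-θ) ^ M := pow_le_pow_left₀ (by linarith) (one_sub_le_exp_neg θ) M
    _ = exp (-(θ * M)) := by rw [← exp_nat_mul]; ring_nf
    _ ≤ exp (log ε) := exp_le_exp.2 (by rw [log_inv] at hM; linarith)
    _ = ε := exp_log hε

lemma natCeil_div_exp_neg_div_le {L K c : ℝ} (hL : 0 ≤ L) (hK : 0 ≤ K) (hc : 1 ≤ c) :
    (⌈L / (exp (-K) / (2 * c))⌉₊ : ℝ) ≤ c * exp (log (2 * L + 1) + K) := by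
  have e : L / (exp (-K) / (2 * c)) = 2 * L * (c * exp K) := by
    rw [exp_neg]
    field_simp
  have h : 1 ≤ c * exp K := one_le_mul_of_one_le_of_one_le hc (one_le_exp hK)
  rw [exp_add, exp_log (by linarith), e]
  calc _ ≤ 2 * L * (c * exp K) + 1 := (Nat.ceil_lt_add_one (by positivity)).le
    _ ≤ _ := by nlinarith

theorem exists_finset_card_le_sum_uncovered_colMass_lt [Fintype S] [Fintype T] [Fintype R]
    [DecidableEq R] [DecidableEq S] [Nonempty R]
    (hq : ∀ i j, 0 ≤ q i j) (hsupp : ∀ i j, q i j ≠ 0 → f i = g j)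
    (hmass : ∑ i, rowMass q i ≤ 1) {η : ℝ} (hη : 0 < η) (hη₁ : η ≤ 1) :
    ∃ A : Finset S,
      (#A : ℝ) ≤ Fintype.card R
          * exp ((log (2 * log (4 / η) + 1) + 4 / η) * (condMutualInfo f q + 1)) ∧
        ∑ j with Disjoint (colSupport q j) A, colMass q j < η := by
  set J := condMutualInfo f q
  have hJ : 0 ≤ J := condMutualInfo_nonneg hq hsupp
  set K := 4 * (J + 1) / η
  have hK : 0 < K := by positivity
  have hc : (1 : ℝ) ≤ Fintype.card R := by exact_mod_cast Fintype.card_pos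
  set θ := exp (-K) / (2 * Fintype.card R)
  have hθ : 0 < θ := by positivity
  have hθ₁ : θ ≤ 1 :=
    div_le_one_of_le₀ (by linarith [exp_le_one_iff.2 (neg_nonpos.2 hK.le)]) (by positivity)
  set L := log (4 / η)
  have hL : 0 ≤ L := log_nonneg (by rw [le_div_iff₀ hη]; linarith)
  have hcov : ∀ j, spreadColMass f q K j ≠ 0 →
      θ * Fintype.card R ≤ ∑ i ∈ colSupport q j, rowMassGivenFibre f q i := fun j hj => by
    convert exp_neg_div_two_le_sum_rowMassGivenFibre hq hj using 1
    simp only [θ]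
    field_simp
  obtain ⟨A, hA, hAunc⟩ := exists_card_le_uncoveredMass_le (rowMassGivenFibre_nonneg hq)
    (spreadColMass_nonneg hq K) (by positivity) hθ hθ₁ sum_rowMassGivenFibre_le_card hcov
    ⌈L / θ⌉₊
  refine ⟨A, ?_, ?_⟩
  · calc (#A : ℝ) ≤ ⌈L / θ⌉₊ := by exact_mod_cast hA
      _ ≤ Fintype.card R * exp (log (2 * L + 1) + K) := natCeil_div_exp_neg_div_le hL hK.le hc
      _ ≤ _ := by
        have : 0 ≤ log (2 * L + 1) := log_nonneg (by linarith)
        gcongr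
        simp only [K, div_eq_mul_inv]
        nlinarith
  · have hbad : badMass f q K ≤ η / 4 := by
      have h := mul_badMass_le hq hsupp K
      rw [le_div_iff₀' (by norm_num), ← mul_le_mul_iff_of_pos_left hK]
      calc K * (4 * badMass f q K) = 4 * (K * badMass f q K) := by ring
        _ ≤ 4 * (J + 1) := by linarith
        _ = K * η := by simp only [K]; field_simp
    have hpow : (1 - θ) ^ ⌈L / θ⌉₊ ≤ η / 4 := by
      refine one_sub_pow_le_of_log_inv_le hθ₁ (by positivity) ?_
      rw [inv_div]
      calc L = θ * (L / θ) := by field_simp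
        _ ≤ θ * ⌈L / θ⌉₊ := mul_le_mul_of_nonneg_left (Nat.le_ceil _) hθ.le
    have hw : ∑ j, spreadColMass f q K j ≤ 1 :=
      calc ∑ j, spreadColMass f q K j ≤ ∑ j, colMass q j :=
            sum_le_sum fun j _ => spreadColMass_le_colMass hq K j
        _ ≤ 1 := by rwa [sum_colMass]
    calc ∑ j with Disjoint (colSupport q j) A, colMass q j
        ≤ uncoveredMass (spreadColMass f q K) (colSupport q) A + 2 * badMass f q K :=
          sum_uncovered_colMass_le hq K A
      _ ≤ η / 4 * 1 + 2 * (η / 4) := by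
          gcongr
          exact hAunc.trans (mul_le_mul hpow hw
            (sum_nonneg fun j _ => spreadColMass_nonneg hq K j) (by positivity))
      _ < η := by linarith

lemma exists_finset_representatives {X : Type*} (s : X → S) (U : Set X) (A : Finset S) :
    ∃ S₀ : Finset X, ↑S₀ ⊆ U ∧ #S₀ ≤ #A ∧ ∀ x ∈ U, s x ∈ A → ∃ z ∈ S₀, s z = s x := by
  classical
  induction A using Finset.induction_on with
  | empty => exact ⟨∅, by simp, by simp, by simp⟩
  | insert a A ha ih =>
    obtain ⟨S₀, hS₀U, hcard, hrep⟩ := ih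
    rw [card_insert_of_notMem ha]
    by_cases h : ∃ z ∈ U, s z = a
    · obtain ⟨z, hzU, hza⟩ := h
      refine ⟨insert z S₀, by simp [Set.insert_subset_iff, hzU, hS₀U],
        (card_insert_le z S₀).trans (by omega), fun x hx hxA => ?_⟩
      rcases mem_insert.1 hxA with hxa | hxA
      · exact ⟨z, mem_insert_self z S₀, hza.trans hxa.symm⟩
      · obtain ⟨z', hz', hz's⟩ := hrep x hx hxA
        exact ⟨z', mem_insert_of_mem hz', hz's⟩
    · refine ⟨S₀, hS₀U, by omega, fun x hx hxA => ?_⟩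
      rcases mem_insert.1 hxA with hxa | hxA
      · exact absurd ⟨x, hx, hxa⟩ h
      · exact hrep x hx hxA

section Measure

variable {X : Type*} [MeasurableSpace X] {μ : Measure X} {s : X → S} {t : X → T}

lemma finEntropy_comp_of_injective {A B : Type*} [Fintype A] [Fintype B] (φ : X → A)
    {e : A → B} (he : Function.Injective e) : finEntropy μ (e ∘ φ) = finEntropy μ φ := by
  refine (Fintype.sum_of_injective e he _ _ (fun b hb => ?_) fun a => ?_).symm
  · have : (e ∘ φ) ⁻¹' {b} = ∅ := by
      ext x
      simpa using fun h => hb ⟨φ x, h⟩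
    simp [this]
  · have : (e ∘ φ) ⁻¹' {e a} = φ ⁻¹' {a} := by
      ext x
      simp [he.eq_iff]
    rw [this]

noncomputable def jointMass (μ : Measure X) (s : X → S) (t : X → T) (i : S) (j : T) : ℝ :=
  μ.real (s ⁻¹' {i} ∩ t ⁻¹' {j})

lemma jointMass_nonneg (μ : Measure X) (s : X → S) (t : X → T) (i : S) (j : T) :
    0 ≤ jointMass μ s t i j :=
  measureReal_nonneg

lemma sum_measureReal_inter_preimage_singleton {F : Type*} [Fintype F] [MeasurableSpace F]
    [MeasurableSingletonClass F] [IsFiniteMeasure μ] {φ : X → F} (hφ : Measurable φ)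
    (A : Set X) : ∑ k, μ.real (A ∩ φ ⁻¹' {k}) = μ.real A := by
  have h := sum_measureReal_preimage_singleton (μ := μ.restrict A) univ
    fun k _ => hφ (measurableSet_singleton k)
  simpa [measureReal_restrict_apply (hφ (measurableSet_singleton _)), Set.inter_comm] using h

lemma rowMass_jointMass [Fintype T] [MeasurableSpace T] [MeasurableSingletonClass T]
    [IsFiniteMeasure μ] (ht : Measurable t) (i : S) :
    rowMass (jointMass μ s t) i = μ.real (s ⁻¹' {i}) :=
  sum_measureReal_inter_preimage_singleton ht _

lemma colMass_jointMass [Fintype S] [MeasurableSpace S] [MeasurableSingletonClass S]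
    [IsFiniteMeasure μ] (hs : Measurable s) (j : T) :
    colMass (jointMass μ s t) j = μ.real (t ⁻¹' {j}) := by
  simp only [colMass, jointMass, Set.inter_comm (s ⁻¹' _)]
  exact sum_measureReal_inter_preimage_singleton hs _

lemma fibreMass_jointMass [Fintype S] [Fintype T] [DecidableEq R] [MeasurableSpace S]
    [MeasurableSingletonClass S] [MeasurableSpace T] [MeasurableSingletonClass T]
    [IsFiniteMeasure μ] (hs : Measurable s) (ht : Measurable t) (f : S → R) (ρ : R) :
    fibreMass f (jointMass μ s t) ρ = μ.real ((f ∘ s) ⁻¹' {ρ}) := by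
  simp only [fibreMass, rowMass_jointMass ht]
  rw [sum_measureReal_preimage_singleton _ fun i _ => hs (measurableSet_singleton i)]
  congr 1
  ext x
  simp

lemma sum_rowMass_jointMass [Fintype S] [Fintype T] [MeasurableSpace S]
    [MeasurableSingletonClass S] [MeasurableSpace T] [MeasurableSingletonClass T]
    [IsFiniteMeasure μ] (hs : Measurable s) (ht : Measurable t) :
    ∑ i, rowMass (jointMass μ s t) i = μ.real Set.univ := by
  simpa [rowMass_jointMass ht] using sum_measureReal_inter_preimage_singleton (μ := μ) hs Set.univ

lemma sum_colMass_jointMass_restrict [Fintype S] [MeasurableSpace S] [MeasurableSingletonClass S]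
    [MeasurableSpace T] [MeasurableSingletonClass T] [IsFiniteMeasure μ] (hs : Measurable s)
    (ht : Measurable t) {U : Set X} (hU : MeasurableSet U) (J : Finset T) :
    ∑ j ∈ J, colMass (jointMass (μ.restrict U) s t) j = μ.real (U ∩ t ⁻¹' J) := by
  simp only [colMass_jointMass hs]
  rw [sum_measureReal_preimage_singleton _ fun j _ => ht (measurableSet_singleton j),
    measureReal_restrict_apply' hU, Set.inter_comm]

theorem finCondMutualInfo_eq_condMutualInfo_jointMass [Fintype S] [Fintype T] [Fintype R]
    [DecidableEq R] [MeasurableSpace S] [MeasurableSingletonClass S] [MeasurableSpace T]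
    [MeasurableSingletonClass T] [IsFiniteMeasure μ] (hs : Measurable s) (ht : Measurable t)
    (hfg : f ∘ s = g ∘ t) :
    finCondMutualInfo μ s t (f ∘ s) = condMutualInfo f (jointMass μ s t) := by
  have hS : finEntropy μ (fun x => (s x, (f ∘ s) x)) = finEntropy μ s :=
    finEntropy_comp_of_injective s (e := fun i => (i, f i)) fun _ _ h => congrArg Prod.fst h
  have hT : finEntropy μ (fun x => (t x, (f ∘ s) x)) = finEntropy μ t := by
    rw [hfg]
    exact finEntropy_comp_of_injective t (e := fun j => (j, g j)) fun _ _ h => congrArg Prod.fst h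
  have he : Function.Injective fun p : S × T => (p.1, p.2, f p.1) := fun p p' h => by
    simp_all [Prod.ext_iff]
  have hST : finEntropy μ (fun x => (s x, t x, (f ∘ s) x))
      = finEntropy μ (fun x => (s x, t x)) :=
    finEntropy_comp_of_injective (B := S × T × R) (fun x => (s x, t x)) he
  have hpair : finEntropy μ (fun x => (s x, t x))
      = ∑ i, ∑ j, negMulLog (jointMass μ s t i j) := by
    rw [finEntropy, Fintype.sum_prod_type]
    refine sum_congr rfl fun i _ => sum_congr rfl fun j _ => ?_
    have : (fun x => (s x, t x)) ⁻¹' {(i, j)} = s ⁻¹' {i} ∩ t ⁻¹' {j} := by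
      ext x
      simp
    rw [this, jointMass, measureReal_def]
  rw [finCondMutualInfo, hS, hT, hST, hpair, condMutualInfo]
  simp only [finEntropy, rowMass_jointMass ht, colMass_jointMass hs, fibreMass_jointMass hs ht,
    measureReal_def]

lemma exists_mem_of_jointMass_restrict_ne_zero {U : Set X} (hU : MeasurableSet U) {i : S}
    {j : T} (h : jointMass (μ.restrict U) s t i j ≠ 0) : ∃ x ∈ U, s x = i ∧ t x = j := by
  have h' : μ.restrict U (s ⁻¹' {i} ∩ t ⁻¹' {j}) ≠ 0 := fun h₀ =>
    h (by simp [jointMass, Measure.real, h₀])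
  rw [Ne, Measure.restrict_apply_eq_zero' hU] at h'
  obtain ⟨x, ⟨hxs, hxt⟩, hxU⟩ := nonempty_of_measure_ne_zero h'
  exact ⟨x, hxU, hxs, hxt⟩

lemma eq_of_jointMass_ne_zero (hfg : f ∘ s = g ∘ t) {i : S} {j : T}
    (h : jointMass μ s t i j ≠ 0) : f i = g j := by
  have h' : μ (s ⁻¹' {i} ∩ t ⁻¹' {j}) ≠ 0 := fun h₀ => h (by simp [jointMass, Measure.real, h₀])
  obtain ⟨x, hxs, hxt⟩ := nonempty_of_measure_ne_zero h'
  simp only [Set.mem_preimage, Set.mem_singleton_iff] at hxs hxt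
  rw [← hxs, ← hxt]
  exact congrFun hfg x

theorem condMutualInfo_jointMass_restrict_le [Fintype S] [Fintype T] [Fintype R]
    [DecidableEq R] [MeasurableSpace S] [MeasurableSingletonClass S] [MeasurableSpace T]
    [MeasurableSingletonClass T] [IsProbabilityMeasure μ] (hs : Measurable s)
    (ht : Measurable t) (hfg : f ∘ s = g ∘ t) {U : Set X} (hU : MeasurableSet U) :
    condMutualInfo f (jointMass (μ.restrict U) s t) ≤ finCondMutualInfo μ s t (f ∘ s) + 2 := by
  have hadd : jointMass (μ.restrict U) s t + jointMass (μ.restrict Uᶜ) s t = jointMass μ s t := by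
    funext i j
    simp only [Pi.add_apply, jointMass]
    rw [← measureReal_add_apply, Measure.restrict_add_restrict_compl hU]
  have hmass : ∑ i, rowMass (jointMass (μ.restrict U) s t) i
      + ∑ i, rowMass (jointMass (μ.restrict Uᶜ) s t) i = 1 := by
    rw [← sum_add_distrib]
    simp only [← rowMass_add, hadd, sum_rowMass_jointMass hs ht, probReal_univ]
  have h := condMutualInfo_add_le (f := f) (jointMass_nonneg (μ.restrict U) s t)
    (jointMass_nonneg (μ.restrict Uᶜ) s t)
  rw [hadd, hmass, ← finCondMutualInfo_eq_condMutualInfo_jointMass (μ := μ) hs ht hfg] at h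
  have hcompl := condMutualInfo_nonneg (jointMass_nonneg (μ.restrict Uᶜ) s t)
    fun i j => eq_of_jointMass_ne_zero hfg
  linarith [log_le_sub_one_of_pos two_pos]

lemma measureReal_le_sum_uncovered_add [Fintype S] [Fintype T] [DecidableEq S]
    [MeasurableSpace S] [MeasurableSingletonClass S] [MeasurableSpace T]
    [MeasurableSingletonClass T] [IsFiniteMeasure μ] (hs : Measurable s) (ht : Measurable t)
    {U : Set X} (hU : MeasurableSet U) (A : Finset S) {S₀ : Finset X}
    (hS₀ : ∀ x ∈ U, s x ∈ A → ∃ z ∈ S₀, s z = s x) :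
    μ.real U ≤ ∑ j with Disjoint (colSupport (jointMass (μ.restrict U) s t) j) A,
        colMass (jointMass (μ.restrict U) s t) j
      + μ.real (U ∩ {x | ∃ w ∈ U, t x = t w ∧ ∃ z ∈ S₀, s w = s z}) := by
  set Q := jointMass (μ.restrict U) s t
  have htot := sum_colMass_jointMass_restrict (μ := μ) hs ht hU univ
  rw [coe_univ, Set.preimage_univ, Set.inter_univ,
    ← sum_filter_add_sum_filter_not univ fun j => Disjoint (colSupport Q j) A] at htot
  have hcov : ∑ j with ¬Disjoint (colSupport Q j) A, colMass Q j
      ≤ μ.real (U ∩ {x | ∃ w ∈ U, t x = t w ∧ ∃ z ∈ S₀, s w = s z}) := by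
    rw [sum_colMass_jointMass_restrict hs ht hU]
    refine measureReal_mono fun x ⟨hxU, hxt⟩ => ⟨hxU, ?_⟩
    simp only [coe_filter, mem_univ, true_and, Set.mem_preimage, Set.mem_ofPred_eq] at hxt
    obtain ⟨i, hiQ, hiA⟩ := not_disjoint_iff.1 hxt
    obtain ⟨w, hwU, rfl, hwt⟩ :=
      exists_mem_of_jointMass_restrict_ne_zero hU (mem_filter.1 hiQ).2
    obtain ⟨z, hz, hzs⟩ := hS₀ w hwU hiA
    exact ⟨w, hwU, hwt.symm, z, hz, hzs.symm⟩
  linarith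

end Measure

end EfficientCover

open EfficientCover in
theorem efficient_cov_from_cond_mutual_info.{u, v, w, z} :
    ∀ α η : ℝ, 0 < α → α ≤ 1 → 0 < η → η < α →
    ∃ C : ℝ,
      ∀ (X : Type u) (S : Type v) (T : Type w) (R : Type z)
        [MeasurableSpace X] [Fintype S] [MeasurableSpace S] [MeasurableSingletonClass S]
        [Fintype T] [MeasurableSpace T] [MeasurableSingletonClass T]
        [Fintype R] [MeasurableSpace R] [MeasurableSingletonClass R]
        (μ : Measure X), IsProbabilityMeasure μ →
      ∀ (s : X → S) (t : X → T) (r : X → R),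
        Measurable s → Measurable t → Measurable r →
        (∃ f : S → R, r = f ∘ s) → (∃ g : T → R, r = g ∘ t) →
      ∀ U : Set X, MeasurableSet U → ENNReal.ofReal α ≤ μ U →
        ∃ S₀ : Finset X, ↑S₀ ⊆ U ∧
          (S₀.card : ℝ) ≤ (Fintype.card R : ℝ)
              * Real.exp (C * (finCondMutualInfo μ s t r + 1)) ∧
          (μ U).toReal - η <
            (μ (U ∩ {x | ∃ w ∈ U, t x = t w ∧ ∃ z ∈ S₀, s w = s z})).toReal := by
  intro α η _ hα₁ hη hηα
  set C := log (2 * log (4 / η) + 1) + 4 / η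
  have hC : 0 ≤ C := add_nonneg
    (log_nonneg (by linarith [log_nonneg (by rw [le_div_iff₀ hη]; linarith : (1 : ℝ) ≤ 4 / η)]))
    (by positivity)
  refine ⟨3 * C, ?_⟩
  rintro X S T R _ _ _ _ _ _ _ _ _ _ μ _ s t r hs ht - ⟨f, rfl⟩ ⟨g, hfg⟩ U hU -
  classical
  have : Nonempty R := (nonempty_of_isProbabilityMeasure μ).map (f ∘ s)
  have hI : 0 ≤ finCondMutualInfo μ s t (f ∘ s) := by
    rw [finCondMutualInfo_eq_condMutualInfo_jointMass hs ht hfg]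
    exact condMutualInfo_nonneg (jointMass_nonneg μ s t) fun i j => eq_of_jointMass_ne_zero hfg
  have hJ := condMutualInfo_jointMass_restrict_le (μ := μ) hs ht hfg hU
  obtain ⟨A, hAcard, hAunc⟩ := exists_finset_card_le_sum_uncovered_colMass_lt
    (jointMass_nonneg (μ.restrict U) s t) (fun i j => eq_of_jointMass_ne_zero hfg)
    (by rw [sum_rowMass_jointMass hs ht, measureReal_restrict_apply_univ]; exact measureReal_le_one)
    hη (hηα.le.trans hα₁)
  obtain ⟨S₀, hS₀U, hS₀card, hS₀⟩ := exists_finset_representatives s U A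
  refine ⟨S₀, hS₀U, ?_, ?_⟩
  · calc (#S₀ : ℝ) ≤ #A := by exact_mod_cast hS₀card
      _ ≤ _ := hAcard
      _ ≤ _ := mul_le_mul_of_nonneg_left (exp_le_exp.2 (by nlinarith)) (by positivity)
  · have := measureReal_le_sum_uncovered_add (μ := μ) hs ht hU A hS₀
    simp only [measureReal_def] at this
    linarith
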